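/- Let M and M' be two mean-field MDPs on the same finite S, A, horizon H and initial distribution μ₁ (with possibly different transition kernels). For all policies π̃, π, π' ∈ Π and all functions f_h : S × A → [0,1] (h = 1,…,H): |E_{π̃,M(π)}[Σ_{h=1}^H f_h(s_h,a_h)] − E_{π̃,M'(π')}[Σ_{h=1}^H f_h(s_h,a_h)]| ≤ H · E_{π̃,M(π)}[Σ_{h=1}^H ‖P_{M,h}(·|s_h,a_h,μ^π_{M,h}) − P_{M',h}(·|s_h,a_h,μ^{π'}_{M',h})‖₁]. (Model Difference Lemma.) -/

import Mathlib

/-- ℓ1 distance between two functions on a finite type. -/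
def l1 {X : Type*} [Fintype X] (p q : X → ℝ) : ℝ := ∑ x, |p x - q x|

/-- A (nonstationary Markov) policy: at each step `h` (0-indexed) and state `s`,
`π h s` is a probability distribution over actions. -/
def IsPolicy {S A : Type*} [Fintype A] (π : ℕ → S → A → ℝ) : Prop :=
  ∀ h s, (∀ a, 0 ≤ π h s a) ∧ ∑ a, π h s a = 1

/-- The transition kernels of a mean-field MDP with horizon `H`:
at each step `h < H`, `P h s a μ ∈ Δ(S)` whenever `μ ∈ Δ(S)`. -/
def IsKernel {S A : Type*} [Fintype S] (H : ℕ) (P : ℕ → S → A → (S → ℝ) → S → ℝ) : Prop :=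
  ∀ h, h < H → ∀ s a (μ : S → ℝ), μ ∈ stdSimplex ℝ S → P h s a μ ∈ stdSimplex ℝ S

/-- Induced state densities: `dens P μ₁ π h = μ^π_{M,h+1}` (1-indexed step `h+1`). -/
def dens {S A : Type*} [Fintype S] [Fintype A] (P : ℕ → S → A → (S → ℝ) → S → ℝ)
    (μ₁ : S → ℝ) (π : ℕ → S → A → ℝ) : ℕ → S → ℝ
  | 0 => μ₁
  | h + 1 => fun s' => ∑ s, ∑ a, dens P μ₁ π h s * π h s a * P h s a (dens P μ₁ π h) s'

/-- The state law of executing `π̃` while the kernels are frozen at the densities induced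
by the reference policy `π` in model `M = (P, μ₁)`. -/
def densF {S A : Type*} [Fintype S] [Fintype A] (P : ℕ → S → A → (S → ℝ) → S → ℝ)
    (μ₁ : S → ℝ) (π πt : ℕ → S → A → ℝ) : ℕ → S → ℝ
  | 0 => μ₁
  | h + 1 => fun s' => ∑ s, ∑ a, densF P μ₁ π πt h s * πt h s a * P h s a (dens P μ₁ π h) s'

/-- `E_{π̃,M(π)}[Σ_{h=1}^H f_h(s_h,a_h)]`. -/
def expF {S A : Type*} [Fintype S] [Fintype A] (H : ℕ) (P : ℕ → S → A → (S → ℝ) → S → ℝ)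
    (μ₁ : S → ℝ) (π πt : ℕ → S → A → ℝ) (f : ℕ → S → A → ℝ) : ℝ :=
  ∑ h ∈ Finset.range H, ∑ s, ∑ a, densF P μ₁ π πt h s * πt h s a * f h s a

/-- The return `J_M(π̃;π)` of executing `π̃` with transitions and rewards frozen by `π`. -/
def Jret {S A : Type*} [Fintype S] [Fintype A] (H : ℕ) (P : ℕ → S → A → (S → ℝ) → S → ℝ)
    (r : ℕ → S → A → (S → ℝ) → ℝ) (μ₁ : S → ℝ) (πt π : ℕ → S → A → ℝ) : ℝ :=
  expF H P μ₁ π πt fun h s a => r h s a (dens P μ₁ π h)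

/-- One-sided conditional model distance `d^{π̃}(M,M'|π)`. -/
def dCond {S A : Type*} [Fintype S] [Fintype A] (H : ℕ)
    (P P' : ℕ → S → A → (S → ℝ) → S → ℝ) (μ₁ : S → ℝ) (π πt : ℕ → S → A → ℝ) : ℝ :=
  expF H P μ₁ π πt fun h s a => l1 (P h s a (dens P μ₁ π h)) (P' h s a (dens P' μ₁ π h))

/-!
Both expectations are sums over steps of `∑ₛ ∑ₐ ν_h(s) π̃_h(a|s) f_h(s,a)` for the two state laws
`ν_h`, `ν'_h` of `π̃`, so with `|f_h| ≤ 1` their difference is at most `∑_{h<H} ‖ν_h − ν'_h‖₁`.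
Splitting `ν K − ν' K' = (ν − ν') K' + ν (K − K')` and using that the stochastic kernel `K'`
is an `ℓ1`-contraction, `‖ν_{h+1} − ν'_{h+1}‖₁ ≤ ‖ν_h − ν'_h‖₁ + D_h`, where `D_h` is the
`ν_h`-expected kernel discrepancy at step `h`. Hence `‖ν_h − ν'_h‖₁ ≤ ∑_{k<h} D_k ≤ ∑_{k<H} D_k`,
and summing over `h < H` gives the factor `H`.
-/

open Finset

section NextLaw

variable {S A : Type*} [Fintype S] [Fintype A]

lemma l1_nonneg {X : Type*} [Fintype X] (p q : X → ℝ) : 0 ≤ l1 p q :=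
  sum_nonneg fun _ _ => abs_nonneg _

lemma l1_triangle {X : Type*} [Fintype X] (p q r : X → ℝ) : l1 p r ≤ l1 p q + l1 q r := by
  rw [l1, l1, l1, ← sum_add_distrib]
  exact sum_le_sum fun x _ => abs_sub_le _ _ _

def nextLaw (ρ : S → ℝ) (σ : S → A → ℝ) (K : S → A → S → ℝ) : S → ℝ :=
  fun s' => ∑ s, ∑ a, ρ s * σ s a * K s a s'

lemma sum_nextLaw (ρ : S → ℝ) (σ : S → A → ℝ) (K : S → A → S → ℝ) :
    ∑ s', nextLaw ρ σ K s' = ∑ s, ∑ a, ρ s * σ s a * ∑ s', K s a s' := by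
  simp only [nextLaw, mul_sum]
  rw [sum_comm]
  exact sum_congr rfl fun s _ => sum_comm

lemma sum_nextLaw_of_sum_eq_one (ρ : S → ℝ) {σ : S → A → ℝ} {K : S → A → S → ℝ}
    (hσ : ∀ s, ∑ a, σ s a = 1) (hK : ∀ s a, ∑ s', K s a s' = 1) :
    ∑ s', nextLaw ρ σ K s' = ∑ s, ρ s := by
  simp [sum_nextLaw, hK, ← mul_sum, hσ]

lemma abs_nextLaw_le (ρ : S → ℝ) (σ : S → A → ℝ) (K : S → A → S → ℝ) (s' : S) :
    |nextLaw ρ σ K s'| ≤ nextLaw |ρ| |σ| |K| s' :=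
  (abs_sum_le_sum_abs _ _).trans <| sum_le_sum fun s _ =>
    (abs_sum_le_sum_abs _ _).trans_eq <| by simp [abs_mul]

lemma nextLaw_mem_stdSimplex {ρ : S → ℝ} {σ : S → A → ℝ} {K : S → A → S → ℝ}
    (hρ : ρ ∈ stdSimplex ℝ S) (hσ : ∀ s, σ s ∈ stdSimplex ℝ A)
    (hK : ∀ s a, K s a ∈ stdSimplex ℝ S) : nextLaw ρ σ K ∈ stdSimplex ℝ S :=
  ⟨fun s' => sum_nonneg fun s _ => sum_nonneg fun a _ =>
      mul_nonneg (mul_nonneg (hρ.1 s) ((hσ s).1 a)) ((hK s a).1 s'),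
    (sum_nextLaw_of_sum_eq_one ρ (fun s => (hσ s).2) fun s a => (hK s a).2).trans hρ.2⟩

lemma l1_nextLaw_left_le {σ : S → A → ℝ} {K : S → A → S → ℝ} (ρ ρ' : S → ℝ)
    (hσ : ∀ s, σ s ∈ stdSimplex ℝ A) (hK : ∀ s a, K s a ∈ stdSimplex ℝ S) :
    l1 (nextLaw ρ σ K) (nextLaw ρ' σ K) ≤ l1 ρ ρ' := by
  have hsub : ∀ s', nextLaw ρ σ K s' - nextLaw ρ' σ K s' = nextLaw (ρ - ρ') σ K s' := by
    intro s'
    simp only [nextLaw, ← sum_sub_distrib, Pi.sub_apply, sub_mul]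
  have habsσ : |σ| = σ := abs_of_nonneg fun s a => (hσ s).1 a
  have habsK : |K| = K := abs_of_nonneg fun s a s' => (hK s a).1 s'
  calc l1 (nextLaw ρ σ K) (nextLaw ρ' σ K)
      ≤ ∑ s', nextLaw |ρ - ρ'| σ K s' := by
        simp only [l1, hsub]
        exact sum_le_sum fun s' _ => (abs_nextLaw_le _ _ _ s').trans_eq (by rw [habsσ, habsK])
    _ = l1 ρ ρ' := sum_nextLaw_of_sum_eq_one _ (fun s => (hσ s).2) fun s a => (hK s a).2

lemma l1_nextLaw_right_le {ρ : S → ℝ} {σ : S → A → ℝ} (K K' : S → A → S → ℝ)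
    (hρ : ∀ s, 0 ≤ ρ s) (hσ : ∀ s a, 0 ≤ σ s a) :
    l1 (nextLaw ρ σ K) (nextLaw ρ σ K') ≤ ∑ s, ∑ a, ρ s * σ s a * l1 (K s a) (K' s a) := by
  have hsub : ∀ s', nextLaw ρ σ K s' - nextLaw ρ σ K' s' = nextLaw ρ σ (K - K') s' := by
    intro s'
    simp only [nextLaw, ← sum_sub_distrib, Pi.sub_apply, mul_sub]
  have habsρ : |ρ| = ρ := abs_of_nonneg hρ
  have habsσ : |σ| = σ := abs_of_nonneg fun s a => hσ s a
  calc l1 (nextLaw ρ σ K) (nextLaw ρ σ K')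
      ≤ ∑ s', nextLaw ρ σ |K - K'| s' := by
        simp only [l1, hsub]
        exact sum_le_sum fun s' _ => (abs_nextLaw_le _ _ _ s').trans_eq (by rw [habsρ, habsσ])
    _ = ∑ s, ∑ a, ρ s * σ s a * l1 (K s a) (K' s a) := sum_nextLaw _ _ _

lemma l1_nextLaw_le {ρ ρ' : S → ℝ} {σ : S → A → ℝ} {K K' : S → A → S → ℝ}
    (hρ : ∀ s, 0 ≤ ρ s) (hσ : ∀ s, σ s ∈ stdSimplex ℝ A) (hK' : ∀ s a, K' s a ∈ stdSimplex ℝ S) :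
    l1 (nextLaw ρ σ K) (nextLaw ρ' σ K') ≤
      l1 ρ ρ' + ∑ s, ∑ a, ρ s * σ s a * l1 (K s a) (K' s a) := by
  calc l1 (nextLaw ρ σ K) (nextLaw ρ' σ K')
      ≤ l1 (nextLaw ρ σ K) (nextLaw ρ σ K') + l1 (nextLaw ρ σ K') (nextLaw ρ' σ K') :=
        l1_triangle _ _ _
    _ ≤ _ := by
        rw [add_comm]
        exact add_le_add (l1_nextLaw_left_le ρ ρ' hσ hK')
          (l1_nextLaw_right_le K K' hρ fun s => (hσ s).1)

lemma abs_sum_sub_le_l1 (ν ν' : S → ℝ) {σ : S → A → ℝ} (hσ : ∀ s, σ s ∈ stdSimplex ℝ A)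
    {g : S → A → ℝ} (hg : ∀ s a, |g s a| ≤ 1) :
    |∑ s, ∑ a, ν s * σ s a * g s a - ∑ s, ∑ a, ν' s * σ s a * g s a| ≤ l1 ν ν' := by
  rw [← sum_sub_distrib]
  refine (abs_sum_le_sum_abs _ _).trans (sum_le_sum fun s _ => ?_)
  have hmean : |∑ a, σ s a * g s a| ≤ 1 := calc
    |∑ a, σ s a * g s a| ≤ ∑ a, σ s a :=
      (abs_sum_le_sum_abs _ _).trans <| sum_le_sum fun a _ => by
        rw [abs_mul, abs_of_nonneg ((hσ s).1 a)]
        exact mul_le_of_le_one_right ((hσ s).1 a) (hg s a)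
    _ = 1 := (hσ s).2
  calc |∑ a, ν s * σ s a * g s a - ∑ a, ν' s * σ s a * g s a|
      = |ν s - ν' s| * |∑ a, σ s a * g s a| := by
        simp only [mul_assoc, ← mul_sum, ← sub_mul, abs_mul]
    _ ≤ |ν s - ν' s| := mul_le_of_le_one_right (abs_nonneg _) hmean

end NextLaw

section MeanFieldMDP

variable {S A : Type*} [Fintype S] [Fintype A] {H : ℕ} {P P' : ℕ → S → A → (S → ℝ) → S → ℝ}
  {μ₁ : S → ℝ} {π πt : ℕ → S → A → ℝ}

lemma densF_succ (h : ℕ) :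
    densF P μ₁ π πt (h + 1) =
      nextLaw (densF P μ₁ π πt h) (πt h) fun s a => P h s a (dens P μ₁ π h) :=
  rfl

lemma dens_mem_stdSimplex (hμ₁ : μ₁ ∈ stdSimplex ℝ S) (hP : IsKernel H P) (hπ : IsPolicy π) :
    ∀ h ≤ H, dens P μ₁ π h ∈ stdSimplex ℝ S
  | 0, _ => hμ₁
  | h + 1, hh =>
    have hμ := dens_mem_stdSimplex hμ₁ hP hπ h (by omega)
    nextLaw_mem_stdSimplex hμ (hπ h) fun s a => hP h (by omega) s a _ hμ

lemma densF_mem_stdSimplex (hμ₁ : μ₁ ∈ stdSimplex ℝ S) (hP : IsKernel H P) (hπ : IsPolicy π)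
    (hπt : IsPolicy πt) : ∀ h ≤ H, densF P μ₁ π πt h ∈ stdSimplex ℝ S
  | 0, _ => hμ₁
  | h + 1, hh =>
    nextLaw_mem_stdSimplex (densF_mem_stdSimplex hμ₁ hP hπ hπt h (by omega)) (hπt h)
      fun s a => hP h (by omega) s a _ (dens_mem_stdSimplex hμ₁ hP hπ h (by omega))

lemma abs_expF_sub_le {π' : ℕ → S → A → ℝ} (hπt : IsPolicy πt) {f : ℕ → S → A → ℝ}
    (hf : ∀ h < H, ∀ s a, |f h s a| ≤ 1) :
    |expF H P μ₁ π πt f - expF H P' μ₁ π' πt f| ≤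
      ∑ h ∈ range H, l1 (densF P μ₁ π πt h) (densF P' μ₁ π' πt h) := by
  rw [expF, expF, ← sum_sub_distrib]
  exact (abs_sum_le_sum_abs _ _).trans <| sum_le_sum fun h hh =>
    abs_sum_sub_le_l1 _ _ (hπt h) (hf h (mem_range.mp hh))

lemma l1_densF_le {π' : ℕ → S → A → ℝ} (hμ₁ : μ₁ ∈ stdSimplex ℝ S) (hP : IsKernel H P)
    (hP' : IsKernel H P') (hπt : IsPolicy πt) (hπ : IsPolicy π) (hπ' : IsPolicy π') :
    ∀ h ≤ H, l1 (densF P μ₁ π πt h) (densF P' μ₁ π' πt h) ≤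
      ∑ k ∈ range h, ∑ s, ∑ a, densF P μ₁ π πt k s * πt k s a *
        l1 (P k s a (dens P μ₁ π k)) (P' k s a (dens P' μ₁ π' k))
  | 0, _ => by simp [l1, densF]
  | h + 1, hh => by
    rw [densF_succ, densF_succ, sum_range_succ]
    refine (l1_nextLaw_le (densF_mem_stdSimplex hμ₁ hP hπ hπt h (by omega)).1 (hπt h)
      fun s a => hP' h (by omega) s a _ (dens_mem_stdSimplex hμ₁ hP' hπ' h (by omega))).trans ?_
    gcongr
    exact l1_densF_le hμ₁ hP hP' hπt hπ hπ' h (by omega)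

end MeanFieldMDP

lemma sum_range_partial_sums_le {D : ℕ → ℝ} {H : ℕ} (hD : ∀ k < H, 0 ≤ D k) :
    ∑ h ∈ range H, ∑ k ∈ range h, D k ≤ H * ∑ k ∈ range H, D k := by
  refine (sum_le_card_nsmul _ _ _ fun h hh => ?_).trans_eq (by rw [card_range, nsmul_eq_mul])
  exact sum_le_sum_of_subset_of_nonneg (range_subset_range.mpr (mem_range.mp hh).le)
    fun k hk _ => hD k (mem_range.mp hk)

/-- **Model Difference Lemma.** For any two mean-field MDPs `M, M'`, policies
`π̃, π, π'` and step-wise functions `f_h` with values in `[0,1]`: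
`|E_{π̃,M(π)}[Σ f] − E_{π̃,M'(π')}[Σ f]| ≤ H · E_{π̃,M(π)}[Σ_h ‖P_{M,h}(·|s,a,μ^π_{M,h}) − P_{M',h}(·|s,a,μ^{π'}_{M',h})‖₁]`. -/
theorem model_difference_lemma {S A : Type*} [Fintype S] [Fintype A] (H : ℕ)
    (P P' : ℕ → S → A → (S → ℝ) → S → ℝ) (μ₁ : S → ℝ) (hμ₁ : μ₁ ∈ stdSimplex ℝ S)
    (hP : IsKernel H P) (hP' : IsKernel H P')
    (πt π π' : ℕ → S → A → ℝ) (hπt : IsPolicy πt) (hπ : IsPolicy π) (hπ' : IsPolicy π')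
    (f : ℕ → S → A → ℝ) (hf : ∀ h, h < H → ∀ s a, f h s a ∈ Set.Icc (0 : ℝ) 1) :
    |expF H P μ₁ π πt f - expF H P' μ₁ π' πt f| ≤
      H * expF H P μ₁ π πt (fun h s a =>
        l1 (P h s a (dens P μ₁ π h)) (P' h s a (dens P' μ₁ π' h))) := by
  have hf_abs : ∀ h < H, ∀ s a, |f h s a| ≤ 1 := fun h hh s a =>
    abs_le.mpr ⟨by linarith [(hf h hh s a).1], (hf h hh s a).2⟩
  have hD : ∀ k < H, 0 ≤ ∑ s, ∑ a, densF P μ₁ π πt k s * πt k s a *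
      l1 (P k s a (dens P μ₁ π k)) (P' k s a (dens P' μ₁ π' k)) := fun k hk =>
    sum_nonneg fun s _ => sum_nonneg fun a _ => mul_nonneg
      (mul_nonneg ((densF_mem_stdSimplex hμ₁ hP hπ hπt k hk.le).1 s) ((hπt k s).1 a))
      (l1_nonneg _ _)
  calc |expF H P μ₁ π πt f - expF H P' μ₁ π' πt f|
      ≤ ∑ h ∈ range H, l1 (densF P μ₁ π πt h) (densF P' μ₁ π' πt h) :=
        abs_expF_sub_le hπt hf_abs
    _ ≤ _ := sum_le_sum fun h hh =>
        l1_densF_le hμ₁ hP hP' hπt hπ hπ' h (mem_range.mp hh).le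
    _ ≤ _ := sum_range_partial_sums_le hD
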